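/- arXiv:0706.1415 — 4 statements merged into one kernel-verified Lean document; each statement's English description precedes it below -/
import Mathlib

section
/- The covariant qubit observables E^{1,a} and E^{1,b} (with effects A(1,a) = (1/2)(I + a·σ) and A(1,b) = (1/2)(I + b·σ), ‖a‖ ≤ 1, ‖b‖ ≤ 1) are jointly measurable if and only if ‖a + b‖ + ‖a − b‖ ≤ 2. -/
noncomputable section

open Matrix
open scoped RealInnerProductSpace ComplexOrder

abbrev V3 := EuclideanSpace ℝ (Fin 3)

def σ1 : Matrix (Fin 2) (Fin 2) ℂ := !![0, 1; 1, 0]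
def σ2 : Matrix (Fin 2) (Fin 2) ℂ := !![0, -Complex.I; Complex.I, 0]
def σ3 : Matrix (Fin 2) (Fin 2) ℂ := !![1, 0; 0, -1]

def dotSigma (a : V3) : Matrix (Fin 2) (Fin 2) ℂ :=
  (a 0 : ℂ) • σ1 + (a 1 : ℂ) • σ2 + (a 2 : ℂ) • σ3

def Amat (α : ℝ) (a : V3) : Matrix (Fin 2) (Fin 2) ℂ :=
  (2⁻¹ : ℂ) • ((α : ℂ) • (1 : Matrix (Fin 2) (Fin 2) ℂ) + dotSigma a)

def matLE (A B : Matrix (Fin 2) (Fin 2) ℂ) : Prop := (B - A).PosSemidef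

def IsEffectM (A : Matrix (Fin 2) (Fin 2) ℂ) : Prop := matLE 0 A ∧ matLE A 1

def JMeff (A B : Matrix (Fin 2) (Fin 2) ℂ) : Prop :=
  ∃ G, matLE 0 G ∧ matLE G A ∧ matLE G B ∧ matLE (A + B - 1) G

def cross3 (a b : V3) : V3 :=
  WithLp.toLp 2 ![a 1 * b 2 - a 2 * b 1, a 2 * b 0 - a 0 * b 2, a 0 * b 1 - a 1 * b 0]

def opNormM (M : Matrix (Fin 2) (Fin 2) ℂ) : ℝ :=
  ‖(Matrix.toEuclideanCLM (𝕜 := ℂ) (n := Fin 2) M : EuclideanSpace ℂ (Fin 2) →L[ℂ] EuclideanSpace ℂ (Fin 2))‖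

lemma dotSigma_apply (v : V3) : dotSigma v =
    !![(v 2 : ℂ), (v 0 : ℂ) - (v 1 : ℂ)*Complex.I; (v 0 : ℂ) + (v 1 : ℂ)*Complex.I, -(v 2 : ℂ)] := by
  unfold dotSigma σ1 σ2 σ3
  ext i j
  fin_cases i <;> fin_cases j <;> simp <;> ring

lemma dotSigma_add (u v : V3) : dotSigma (u + v) = dotSigma u + dotSigma v := by
  simp only [dotSigma_apply]
  ext i j
  fin_cases i <;> fin_cases j <;> simp [PiLp.add_apply] <;> push_cast <;> ring

lemma dotSigma_sub (u v : V3) : dotSigma (u - v) = dotSigma u - dotSigma v := by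
  simp only [dotSigma_apply]
  ext i j
  fin_cases i <;> fin_cases j <;> simp [PiLp.sub_apply] <;> push_cast <;> ring

lemma dotSigma_smul (c : ℝ) (v : V3) : dotSigma (c • v) = (c:ℂ) • dotSigma v := by
  simp only [dotSigma_apply]
  ext i j
  fin_cases i <;> fin_cases j <;> simp [PiLp.smul_apply] <;> push_cast <;> ring

lemma norm_V3_sq (v : V3) : ‖v‖^2 = v 0^2 + v 1^2 + v 2^2 := by
  rw [EuclideanSpace.norm_eq, Real.sq_sqrt (by positivity)]
  simp [Fin.sum_univ_three, sq_abs]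

-- explicit matrix form
lemma form_apply (γ : ℝ) (v : V3) :
    (γ:ℂ) • (1 : Matrix (Fin 2) (Fin 2) ℂ) + dotSigma v =
    !![(γ:ℂ) + (v 2 : ℂ), (v 0 : ℂ) - (v 1 : ℂ)*Complex.I;
       (v 0 : ℂ) + (v 1 : ℂ)*Complex.I, (γ:ℂ) - (v 2 : ℂ)] := by
  rw [dotSigma_apply]
  ext i j
  fin_cases i <;> fin_cases j <;> simp [Matrix.one_apply] <;> ring

lemma hermitian_form (γ : ℝ) (v : V3) :
    ((γ:ℂ) • (1 : Matrix (Fin 2) (Fin 2) ℂ) + dotSigma v).IsHermitian := by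
  rw [form_apply]
  ext i j
  fin_cases i <;> fin_cases j <;>
    simp [Matrix.IsHermitian, Matrix.conjTranspose_apply, Complex.ext_iff]

-- square of dotSigma
lemma dotSigma_sq (v : V3) :
    dotSigma v * dotSigma v = ((‖v‖^2 : ℝ) : ℂ) • (1 : Matrix (Fin 2) (Fin 2) ℂ) := by
  rw [dotSigma_apply, norm_V3_sq]
  ext i j
  fin_cases i <;> fin_cases j <;>
    simp only [Matrix.mul_apply, Fin.sum_univ_two, Matrix.cons_val', Matrix.cons_val_zero,
      Matrix.cons_val_one, Matrix.head_cons, Matrix.head_fin_const, Matrix.empty_val',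
      Matrix.cons_val_fin_one, Matrix.smul_apply, Matrix.one_apply, if_true, Matrix.one_apply_ne,
      smul_eq_mul] <;>
    push_cast <;> simp [Matrix.one_apply] <;> ring_nf <;> simp [Complex.I_sq] <;> ring_nf

lemma psd_scalar (c : ℝ) (hc : 0 ≤ c) :
    ((c:ℂ) • (1 : Matrix (Fin 2) (Fin 2) ℂ)).PosSemidef := by
  have h := Matrix.posSemidef_conjTranspose_mul_self
    ((Real.sqrt c : ℂ) • (1 : Matrix (Fin 2) (Fin 2) ℂ))
  have he : (((Real.sqrt c : ℝ) : ℂ) • (1 : Matrix (Fin 2) (Fin 2) ℂ))ᴴ *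
      (((Real.sqrt c : ℝ) : ℂ) • (1 : Matrix (Fin 2) (Fin 2) ℂ)) =
      (c:ℂ) • (1 : Matrix (Fin 2) (Fin 2) ℂ) := by
    simp [Matrix.conjTranspose_smul, smul_smul, ← Complex.ofReal_mul,
      Real.mul_self_sqrt hc]
  rwa [he] at h

lemma psd_of_le (γ : ℝ) (v : V3) (h : ‖v‖ ≤ γ) :
    ((γ:ℂ) • (1 : Matrix (Fin 2) (Fin 2) ℂ) + dotSigma v).PosSemidef := by
  set r := ‖v‖ with hr
  have hrn : 0 ≤ r := norm_nonneg v
  have key : ((r:ℂ) • (1 : Matrix (Fin 2) (Fin 2) ℂ) + dotSigma v).PosSemidef := by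
    rcases eq_or_lt_of_le hrn with h0 | hpos
    · have hv : v = 0 := by rwa [eq_comm, norm_eq_zero] at h0
      have : ((r:ℂ) • (1 : Matrix (Fin 2) (Fin 2) ℂ) + dotSigma v) = 0 := by
        rw [form_apply, hv]
        norm_num [← h0]
        ext i j; fin_cases i <;> fin_cases j <;> simp
      rw [this]; exact Matrix.PosSemidef.zero
    · set N : Matrix (Fin 2) (Fin 2) ℂ := (r:ℂ) • 1 + dotSigma v with hN
      set B : Matrix (Fin 2) (Fin 2) ℂ := (((Real.sqrt (2*r))⁻¹ : ℝ) : ℂ) • N with hB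
      have hNh : Nᴴ = N := hermitian_form r v
      have hsq : N * N = ((2*r : ℝ) : ℂ) • N := by
        rw [hN, add_mul, mul_add, mul_add, dotSigma_sq, ← hr]
        rw [smul_mul_smul_comm, one_mul, Matrix.smul_mul, one_mul, Matrix.mul_smul, mul_one]
        push_cast
        module
      have he : Bᴴ * B = N := by
        rw [hB, Matrix.conjTranspose_smul, hNh, Matrix.smul_mul, Matrix.mul_smul, smul_smul, hsq,
          smul_smul]
        have hone : (Real.sqrt (2*r))⁻¹ * (Real.sqrt (2*r))⁻¹ * (2*r) = 1 := by
          rw [← mul_inv, Real.mul_self_sqrt (by positivity)]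
          exact inv_mul_cancel₀ (by positivity)
        rw [Complex.star_def, Complex.conj_ofReal, ← Complex.ofReal_mul, ← Complex.ofReal_mul,
          hone, Complex.ofReal_one, one_smul]
      exact he ▸ Matrix.posSemidef_conjTranspose_mul_self B
  have hdec : (γ:ℂ) • (1 : Matrix (Fin 2) (Fin 2) ℂ) + dotSigma v =
      ((γ - r : ℝ):ℂ) • (1 : Matrix (Fin 2) (Fin 2) ℂ) +
        ((r:ℂ) • (1 : Matrix (Fin 2) (Fin 2) ℂ) + dotSigma v) := by
    push_cast; module
  rw [hdec]
  exact (psd_scalar _ (by linarith)).add key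

lemma le_of_psd (γ : ℝ) (v : V3)
    (h : ((γ:ℂ) • (1 : Matrix (Fin 2) (Fin 2) ℂ) + dotSigma v).PosSemidef) : ‖v‖ ≤ γ := by
  set r := ‖v‖ with hr
  have hrn : 0 ≤ r := norm_nonneg v
  have hr2 : r^2 = v 0^2 + v 1^2 + v 2^2 := norm_V3_sq v
  rw [form_apply] at h
  have h00 : (0:ℝ) ≤ γ + v 2 := by
    have := h.dotProduct_mulVec_nonneg ![1, 0]
    simp [dotProduct, Matrix.mulVec, Fin.sum_univ_two] at this
    rw [Complex.le_def] at this
    simp at this ⊢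
    linarith
  have h11 : (0:ℝ) ≤ γ - v 2 := by
    have := h.dotProduct_mulVec_nonneg ![0, 1]
    simp [dotProduct, Matrix.mulVec, Fin.sum_univ_two] at this
    linarith
  have hsum : 0 ≤ r + v 2 := by nlinarith [sq_nonneg (v 0), sq_nonneg (v 1), sq_nonneg (r + v 2), sq_nonneg (r - v 2)]
  have hq := h.dotProduct_mulVec_nonneg ![(v 0 : ℂ) - (v 1 : ℂ)*Complex.I, -((v 2 : ℂ) + (r:ℝ))]
  have hqe : (star ![(v 0 : ℂ) - (v 1 : ℂ)*Complex.I, -((v 2 : ℂ) + (r:ℝ))]) ⬝ᵥ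
      (!![(γ:ℂ) + (v 2 : ℂ), (v 0 : ℂ) - (v 1 : ℂ)*Complex.I;
       (v 0 : ℂ) + (v 1 : ℂ)*Complex.I, (γ:ℂ) - (v 2 : ℂ)] *ᵥ
       ![(v 0 : ℂ) - (v 1 : ℂ)*Complex.I, -((v 2 : ℂ) + (r:ℝ))]) =
      (((γ - r) * (2*r*(r + v 2)) : ℝ) : ℂ) := by
    have hr2c : ((r:ℂ))^2 = (v 0:ℂ)^2 + (v 1:ℂ)^2 + (v 2:ℂ)^2 := by
      push_cast [← hr2]; norm_cast
    simp [dotProduct, Matrix.mulVec, Fin.sum_univ_two, Complex.star_def, map_sub, map_add,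
      _root_.map_mul, Complex.conj_ofReal, Complex.conj_I]
    push_cast
    linear_combination (2*(r:ℂ) + (v 2:ℂ) - γ) * hr2c + (v 1:ℂ)^2 * (2*(r:ℂ) + (v 2:ℂ) - (γ:ℂ)) * Complex.I_sq
  rw [hqe, Complex.le_def] at hq
  have hqr : 0 ≤ (γ - r) * (2*r*(r + v 2)) := by simpa using hq.1
  rcases eq_or_lt_of_le hsum with he | hlt
  · linarith
  · rcases eq_or_lt_of_le hrn with he0 | hr0
    · linarith
    · have hpos : 0 < 2*r*(r + v 2) := by positivity
      nlinarith

lemma psd_iff (γ : ℝ) (v : V3) :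
    ((γ:ℂ) • (1 : Matrix (Fin 2) (Fin 2) ℂ) + dotSigma v).PosSemidef ↔ ‖v‖ ≤ γ :=
  ⟨le_of_psd γ v, psd_of_le γ v⟩

lemma Amat_form (a : V3) :
    Amat 1 a = (((2⁻¹:ℝ)):ℂ) • (1 : Matrix (Fin 2) (Fin 2) ℂ) + dotSigma ((2⁻¹:ℝ) • a) := by
  unfold Amat
  rw [dotSigma_smul]
  push_cast
  module

lemma form_sub_form (γ δ : ℝ) (u w : V3) :
    ((γ:ℂ) • (1 : Matrix (Fin 2) (Fin 2) ℂ) + dotSigma u) -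
      ((δ:ℂ) • (1 : Matrix (Fin 2) (Fin 2) ℂ) + dotSigma w) =
    (((γ - δ : ℝ)):ℂ) • (1 : Matrix (Fin 2) (Fin 2) ℂ) + dotSigma (u - w) := by
  rw [dotSigma_sub]
  push_cast
  module

-- matLE of two forms
lemma matLE_form_iff (γ δ : ℝ) (u w : V3) :
    matLE ((δ:ℂ) • (1 : Matrix (Fin 2) (Fin 2) ℂ) + dotSigma w)
          ((γ:ℂ) • (1 : Matrix (Fin 2) (Fin 2) ℂ) + dotSigma u) ↔ ‖u - w‖ ≤ γ - δ := by
  unfold matLE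
  rw [form_sub_form, psd_iff]

theorem stmt7 (a b : V3) (ha : ‖a‖ ≤ 1) (hb : ‖b‖ ≤ 1) :
    JMeff (Amat 1 a) (Amat 1 b) ↔ ‖a + b‖ + ‖a - b‖ ≤ 2 := by
  constructor
  · rintro ⟨G, h0, hA, hB, hAB⟩
    -- G is hermitian
    have hGpsd : G.PosSemidef := by
      have := h0; unfold matLE at this; rwa [sub_zero] at this
    have hherm : Gᴴ = G := hGpsd.isHermitian
    set g : ℝ := (G 0 0).re + (G 1 1).re with hg
    set m : V3 := (WithLp.equiv 2 (Fin 3 → ℝ)).symm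
      ![2*(G 1 0).re, 2*(G 1 0).im, (G 0 0).re - (G 1 1).re] with hm
    have hG00 : G 0 0 = ((G 0 0).re : ℂ) := by
      have := congrFun (congrFun hherm 0) 0
      simp [Matrix.conjTranspose_apply] at this
      rw [Complex.ext_iff]
      constructor
      · simp
      · have := congrArg Complex.im this
        simp at this; simp; linarith [Complex.conj_im (G 0 0)]
    have hG11 : G 1 1 = ((G 1 1).re : ℂ) := by
      have := congrFun (congrFun hherm 1) 1
      simp [Matrix.conjTranspose_apply] at this
      rw [Complex.ext_iff]
      constructor
      · simp
      · have := congrArg Complex.im this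
        simp at this; simp; linarith [Complex.conj_im (G 1 1)]
    have hG01 : G 0 1 = (starRingEnd ℂ) (G 1 0) := by
      have := congrFun (congrFun hherm 0) 1
      simpa [Matrix.conjTranspose_apply] using this.symm
    have hm0 : m 0 = 2*(G 1 0).re := rfl
    have hm1 : m 1 = 2*(G 1 0).im := rfl
    have hm2 : m 2 = (G 0 0).re - (G 1 1).re := rfl
    have hconj : (starRingEnd ℂ) (G 1 0) = ((G 1 0).re : ℂ) - ((G 1 0).im : ℂ) * Complex.I := by
      rw [Complex.ext_iff]; simp
    have hGeq : G = (((g/2 : ℝ)):ℂ) • (1 : Matrix (Fin 2) (Fin 2) ℂ) + dotSigma ((2⁻¹:ℝ) • m) := by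
      rw [dotSigma_apply]
      have hmv : ∀ i, ((2⁻¹:ℝ) • m) i = 2⁻¹ * m i := fun i => rfl
      ext i j
      fin_cases i <;> fin_cases j
      · simp [Matrix.one_apply, hmv, hg]
        rw [hm2]; push_cast; linear_combination hG00
      · simp [Matrix.one_apply, hmv, hg]
        rw [hm0, hm1, hG01]; push_cast; linear_combination hconj
      · simp [Matrix.one_apply, hmv, hg]
        rw [hm0, hm1]; push_cast; linear_combination -Complex.re_add_im (G 1 0)
      · simp [Matrix.one_apply, hmv, hg]
        rw [hm2]; push_cast; linear_combination hG11
    -- translate the four conditions into vector inequalities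
    have n1 : ‖m‖ ≤ g := by
      have h := hGpsd
      rw [hGeq, psd_iff, norm_smul] at h
      simp at h; linarith
    have n2 : ‖a - m‖ ≤ 1 - g := by
      rw [hGeq, Amat_form, matLE_form_iff] at hA
      have hv : (2⁻¹:ℝ) • a - (2⁻¹:ℝ) • m = (2⁻¹:ℝ) • (a - m) := by module
      rw [hv, norm_smul] at hA
      simp at hA; linarith
    have n3 : ‖b - m‖ ≤ 1 - g := by
      rw [hGeq, Amat_form, matLE_form_iff] at hB
      have hv : (2⁻¹:ℝ) • b - (2⁻¹:ℝ) • m = (2⁻¹:ℝ) • (b - m) := by module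
      rw [hv, norm_smul] at hB
      simp at hB; linarith
    have hsum : Amat 1 a + Amat 1 b - 1 =
        (((0:ℝ)):ℂ) • (1 : Matrix (Fin 2) (Fin 2) ℂ) + dotSigma ((2⁻¹:ℝ) • a + (2⁻¹:ℝ) • b) := by
      rw [Amat_form a, Amat_form b, dotSigma_add]
      push_cast; module
    have n4 : ‖m - (a + b)‖ ≤ g := by
      rw [hGeq, hsum, matLE_form_iff] at hAB
      have hv : (2⁻¹:ℝ) • m - ((2⁻¹:ℝ) • a + (2⁻¹:ℝ) • b) = (2⁻¹:ℝ) • (m - (a + b)) := by module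
      rw [hv, norm_smul] at hAB
      simp at hAB; linarith
    -- conclude
    have t1 : ‖a + b‖ ≤ 2 * g := by
      have : a + b = m + (a + b - m) := by module
      calc ‖a + b‖ = ‖m + (a + b - m)‖ := by rw [← this]
        _ ≤ ‖m‖ + ‖a + b - m‖ := norm_add_le _ _
        _ = ‖m‖ + ‖m - (a + b)‖ := by rw [norm_sub_rev]
        _ ≤ 2 * g := by linarith
    have t2 : ‖a - b‖ ≤ 2 * (1 - g) := by
      have : a - b = (a - m) - (b - m) := by module
      calc ‖a - b‖ = ‖(a - m) - (b - m)‖ := by rw [← this]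
        _ ≤ ‖a - m‖ + ‖b - m‖ := norm_sub_le _ _
        _ ≤ 2 * (1 - g) := by linarith
    linarith
  · intro hcond
    refine ⟨(((‖a+b‖/4 : ℝ)):ℂ) • (1 : Matrix (Fin 2) (Fin 2) ℂ) + dotSigma ((4⁻¹:ℝ) • (a+b)),
      ?_, ?_, ?_, ?_⟩
    · show ((((‖a+b‖/4 : ℝ)):ℂ) • (1 : Matrix (Fin 2) (Fin 2) ℂ) + dotSigma ((4⁻¹:ℝ) • (a+b)) - 0).PosSemidef
      rw [sub_zero]
      apply psd_of_le
      rw [norm_smul, Real.norm_eq_abs, abs_of_nonneg (by norm_num : (0:ℝ) ≤ 4⁻¹)]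
      linarith
    · rw [Amat_form, matLE_form_iff]
      have hv : (2⁻¹:ℝ) • a - (4⁻¹:ℝ) • (a+b) = (4⁻¹:ℝ) • (a - b) := by module
      rw [hv, norm_smul]
      rw [Real.norm_eq_abs, abs_of_nonneg (by norm_num : (0:ℝ) ≤ 4⁻¹)]
      linarith
    · rw [Amat_form, matLE_form_iff]
      have hv : (2⁻¹:ℝ) • b - (4⁻¹:ℝ) • (a+b) = (4⁻¹:ℝ) • (b - a) := by module
      rw [hv, norm_smul]
      rw [Real.norm_eq_abs, abs_of_nonneg (by norm_num : (0:ℝ) ≤ 4⁻¹), norm_sub_rev]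
      linarith
    · have hsum : Amat 1 a + Amat 1 b - 1 =
          (((0:ℝ)):ℂ) • (1 : Matrix (Fin 2) (Fin 2) ℂ) + dotSigma ((2⁻¹:ℝ) • a + (2⁻¹:ℝ) • b) := by
        rw [Amat_form a, Amat_form b, dotSigma_add]
        push_cast; module
      rw [hsum, matLE_form_iff]
      have hv : (4⁻¹:ℝ) • (a+b) - ((2⁻¹:ℝ) • a + (2⁻¹:ℝ) • b) = (4⁻¹:ℝ) • (-(a + b)) := by module
      rw [hv, norm_smul]
      rw [Real.norm_eq_abs, abs_of_nonneg (by norm_num : (0:ℝ) ≤ 4⁻¹), norm_neg]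
      linarith
end
end

section
/- Let a, b ∈ ℝ³ lie in a plane with unit normal u, and let U = u·σ. A family of effects G₊₊ = A(γ, (a+b)/2 + pu), with the other three effects determined by the marginal conditions for E^{1,a}, E^{1,b}, constitutes a U-covariant joint observable of E^{1,a} and E^{1,b} if and only if √(‖a+b‖²/4 + p²) ≤ γ ≤ 1 − √(‖a−b‖²/4 + p²). -/
noncomputable section

open Matrix
open scoped RealInnerProductSpace ComplexOrder

def IsJointObsM (E1 E2 Gpp Gpm Gmp Gmm : Matrix (Fin 2) (Fin 2) ℂ) : Prop :=
  Gpp.PosSemidef ∧ Gpm.PosSemidef ∧ Gmp.PosSemidef ∧ Gmm.PosSemidef ∧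
  Gpp + Gpm + Gmp + Gmm = 1 ∧ Gpp + Gpm = E1 ∧ Gpp + Gmp = E2

lemma dotSigma_entries (a : V3) : dotSigma a =
    !![(a 2 : ℂ), (a 0 : ℂ) - (a 1 : ℂ) * Complex.I; (a 0 : ℂ) + (a 1 : ℂ) * Complex.I, -(a 2 : ℂ)] := by
  ext i j
  fin_cases i <;> fin_cases j <;>
    simp [dotSigma, σ1, σ2, σ3] <;> ring

lemma amat_entries (α : ℝ) (a : V3) : Amat α a =
    (2⁻¹ : ℂ) • !![(α : ℂ) + (a 2 : ℂ), (a 0 : ℂ) - (a 1 : ℂ) * Complex.I;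
        (a 0 : ℂ) + (a 1 : ℂ) * Complex.I, (α : ℂ) - (a 2 : ℂ)] := by
  rw [Amat, dotSigma_entries]
  ext i j
  fin_cases i <;> fin_cases j <;> simp [Matrix.one_apply] <;> ring

lemma norm_sq_v3 (v : V3) : ‖v‖ ^ 2 = v 0 ^ 2 + v 1 ^ 2 + v 2 ^ 2 := by
  rw [EuclideanSpace.norm_eq, Real.sq_sqrt (by positivity)]
  simp [Fin.sum_univ_three]

lemma amat_herm (α : ℝ) (v : V3) : (Amat α v).IsHermitian := by
  rw [amat_entries]
  unfold Matrix.IsHermitian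
  ext i j
  fin_cases i <;> fin_cases j <;>
    simp [Matrix.conjTranspose_apply, Complex.ext_iff]

set_option maxHeartbeats 1000000 in
lemma amat_psd_iff (α : ℝ) (v : V3) : (Amat α v).PosSemidef ↔ ‖v‖ ≤ α := by
  have hn : ‖v‖ ^ 2 = v 0 ^ 2 + v 1 ^ 2 + v 2 ^ 2 := norm_sq_v3 v
  have hn0 : 0 ≤ ‖v‖ := norm_nonneg v
  rw [Matrix.posSemidef_iff_dotProduct_mulVec]
  constructor
  · rintro ⟨-, hq⟩
    have h1 := hq ![1, 0]
    have h2 := hq ![0, 1]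
    have h3 := hq ![(v 2 : ℂ) - (‖v‖ : ℝ), (v 0 : ℂ) + (v 1 : ℂ) * Complex.I]
    rw [amat_entries] at h1 h2 h3
    simp [dotProduct, Matrix.mulVec, Fin.sum_univ_two, Complex.le_def, Complex.ext_iff] at h1 h2 h3
    have hv2 : v 2 ≤ ‖v‖ := by nlinarith [hn, hn0, sq_nonneg (v 0), sq_nonneg (v 1)]
    have hv2' : -‖v‖ ≤ v 2 := by nlinarith [hn, hn0, sq_nonneg (v 0), sq_nonneg (v 1)]
    have h4 : 0 ≤ (‖v‖ - v 2) * (‖v‖ * (α - ‖v‖)) := by nlinarith [h3.1, hn, h1, h2, hn0]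
    rcases eq_or_lt_of_le hn0 with h0 | h0
    · have hv20 : v 2 = 0 := by nlinarith [hn, sq_nonneg (v 0), sq_nonneg (v 1)]
      rw [← h0]; linarith
    · by_contra hc
      push_neg at hc
      have hnv2 : 0 < ‖v‖ - v 2 := by linarith
      have h5 : 0 ≤ ‖v‖ * (α - ‖v‖) := by nlinarith [h4, hnv2]
      nlinarith [h5, h0]
  · intro hle
    refine ⟨amat_herm α v, fun x => ?_⟩
    rw [amat_entries]
    have hv2 : v 2 ≤ ‖v‖ := by nlinarith [hn, hn0, sq_nonneg (v 0), sq_nonneg (v 1)]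
    have hv2' : -‖v‖ ≤ v 2 := by nlinarith [hn, hn0, sq_nonneg (v 0), sq_nonneg (v 1)]
    have hA : (0:ℝ) ≤ α + v 2 := by linarith
    have hB : (0:ℝ) ≤ α - v 2 := by linarith
    have hAB : v 0 ^ 2 + v 1 ^ 2 ≤ (α + v 2) * (α - v 2) := by nlinarith [hle, hn, hn0]
    simp only [dotProduct, Matrix.mulVec, Fin.sum_univ_two, Complex.le_def]
    simp [Complex.le_def]
    set r0 := (x 0).re; set t0 := (x 0).im; set r1 := (x 1).re; set t1 := (x 1).im
    refine ⟨?_, by ring⟩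
    have hS : (0:ℝ) ≤ (α + v 2) * (r0 ^ 2 + t0 ^ 2) + (α - v 2) * (r1 ^ 2 + t1 ^ 2) := by positivity
    have hXY : (0:ℝ) ≤ (r0 * r1 + t0 * t1) ^ 2 + (r0 * t1 - t0 * r1) ^ 2 := by positivity
    nlinarith [hS, hXY, mul_nonneg (sub_nonneg.2 hAB) hXY,
      sq_nonneg (v 0 * (r0 * t1 - t0 * r1) - v 1 * (r0 * r1 + t0 * t1)),
      sq_nonneg ((α + v 2) * (r0 ^ 2 + t0 ^ 2) - (α - v 2) * (r1 ^ 2 + t1 ^ 2))]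

lemma amat_add (α β : ℝ) (v w : V3) : Amat α v + Amat β w = Amat (α + β) (v + w) := by
  simp only [amat_entries]
  ext i j
  fin_cases i <;> fin_cases j <;>
    (simp [PiLp.add_apply]; push_cast; ring)

lemma amat_two_zero : Amat 2 0 = 1 := by
  rw [amat_entries]
  ext i j
  fin_cases i <;> fin_cases j <;> simp [Matrix.one_apply]

lemma inner_expand (u v : V3) : ⟪u, v⟫ = u 0 * v 0 + u 1 * v 1 + u 2 * v 2 := by
  simp [PiLp.inner_apply, Fin.sum_univ_three]
  ring

set_option maxHeartbeats 1000000 in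
lemma UAU (u v : V3) (hu : ‖u‖ = 1) (α : ℝ) :
    dotSigma u * Amat α v * dotSigma u = Amat α ((2 * ⟪u, v⟫) • u - v) := by
  have hn := norm_sq_v3 u
  rw [hu] at hn
  have hu2 : u 0 ^ 2 + u 1 ^ 2 + u 2 ^ 2 = 1 := by linarith [hn]
  rw [inner_expand]
  simp only [amat_entries, dotSigma_entries]
  refine Matrix.ext fun i j => ?_
  fin_cases i <;> fin_cases j
  · simp [Matrix.mul_apply, Fin.sum_univ_two, PiLp.smul_apply, PiLp.sub_apply, smul_eq_mul,
      Complex.ext_iff]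
    constructor
    · linear_combination ((α - v 2) / 2) * hu2
    · linear_combination (0 : ℝ) * hu2
  · simp [Matrix.mul_apply, Fin.sum_univ_two, PiLp.smul_apply, PiLp.sub_apply, smul_eq_mul,
      Complex.ext_iff]
    constructor
    · linear_combination (-(v 0) / 2) * hu2
    · linear_combination ((v 1) / 2) * hu2
  · simp [Matrix.mul_apply, Fin.sum_univ_two, PiLp.smul_apply, PiLp.sub_apply, smul_eq_mul,
      Complex.ext_iff]
    constructor
    · linear_combination (-(v 0) / 2) * hu2
    · linear_combination (-(v 1) / 2) * hu2
  · simp [Matrix.mul_apply, Fin.sum_univ_two, PiLp.smul_apply, PiLp.sub_apply, smul_eq_mul,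
      Complex.ext_iff]
    constructor
    · linear_combination ((α + v 2) / 2) * hu2
    · linear_combination (0 : ℝ) * hu2

set_option maxHeartbeats 1000000 in
theorem stmt12 (a b u : V3) (p γ : ℝ) (ha : ‖a‖ ≤ 1) (hb : ‖b‖ ≤ 1) (hu : ‖u‖ = 1)
    (hua : ⟪u, a⟫ = 0) (hub : ⟪u, b⟫ = 0)
    (g : V3) (hg : g = (2⁻¹ : ℝ) • (a + b) + p • u) :
    ((Amat γ g).PosSemidef ∧ (Amat (1 - γ) (a - g)).PosSemidef ∧
      (Amat (1 - γ) (b - g)).PosSemidef ∧ (Amat γ (g - (a + b))).PosSemidef ∧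
      IsJointObsM (Amat 1 a) (Amat 1 b)
        (Amat γ g) (Amat (1 - γ) (a - g)) (Amat (1 - γ) (b - g)) (Amat γ (g - (a + b))) ∧
      dotSigma u * Amat γ g * dotSigma u = Amat γ (g - (a + b)) ∧
      dotSigma u * Amat (1 - γ) (a - g) * dotSigma u = Amat (1 - γ) (b - g)) ↔
    (Real.sqrt (‖a + b‖ ^ 2 / 4 + p ^ 2) ≤ γ ∧
      γ ≤ 1 - Real.sqrt (‖a - b‖ ^ 2 / 4 + p ^ 2)) := by
  have hnu := norm_sq_v3 u
  rw [hu] at hnu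
  have hu2 : u 0 ^ 2 + u 1 ^ 2 + u 2 ^ 2 = 1 := by linarith [hnu]
  rw [inner_expand] at hua hub
  have hgc : ∀ i, g i = (a i + b i) / 2 + p * u i := by
    intro i
    rw [hg]
    simp [PiLp.add_apply, PiLp.smul_apply, smul_eq_mul]
    ring
  have e1 : ‖g‖ ^ 2 = ‖a + b‖ ^ 2 / 4 + p ^ 2 := by
    simp only [norm_sq_v3, PiLp.add_apply, hgc]
    linear_combination p ^ 2 * hu2 + p * hua + p * hub
  have e2 : ‖a - g‖ ^ 2 = ‖a - b‖ ^ 2 / 4 + p ^ 2 := by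
    simp only [norm_sq_v3, PiLp.sub_apply, hgc]
    linear_combination p ^ 2 * hu2 - p * hua + p * hub
  have e3 : ‖b - g‖ ^ 2 = ‖a - b‖ ^ 2 / 4 + p ^ 2 := by
    simp only [norm_sq_v3, PiLp.sub_apply, hgc]
    linear_combination p ^ 2 * hu2 + p * hua - p * hub
  have e4 : ‖g - (a + b)‖ ^ 2 = ‖a + b‖ ^ 2 / 4 + p ^ 2 := by
    simp only [norm_sq_v3, PiLp.sub_apply, PiLp.add_apply, hgc]
    linear_combination p ^ 2 * hu2 - p * hua - p * hub
  have s1 : Real.sqrt (‖a + b‖ ^ 2 / 4 + p ^ 2) = ‖g‖ := by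
    rw [← e1, Real.sqrt_sq (norm_nonneg g)]
  have s2 : Real.sqrt (‖a - b‖ ^ 2 / 4 + p ^ 2) = ‖a - g‖ := by
    rw [← e2, Real.sqrt_sq (norm_nonneg _)]
  have s3 : ‖b - g‖ = ‖a - g‖ := by
    rw [← Real.sqrt_sq (norm_nonneg (b - g)), e3, ← e2, Real.sqrt_sq (norm_nonneg _)]
  have s4 : ‖g - (a + b)‖ = ‖g‖ := by
    rw [← Real.sqrt_sq (norm_nonneg (g - (a + b))), e4, ← e1, Real.sqrt_sq (norm_nonneg _)]
  have hug : ⟪u, g⟫ = p := by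
    simp only [inner_expand, hgc]
    linear_combination p * hu2 + 2⁻¹ * hua + 2⁻¹ * hub
  have huag : ⟪u, a - g⟫ = -p := by
    simp only [inner_expand, PiLp.sub_apply, hgc]
    linear_combination -(p * hu2) + 2⁻¹ * hua - 2⁻¹ * hub
  have hv1 : (2 * ⟪u, g⟫) • u - g = g - (a + b) := by
    rw [hug]
    ext i
    simp [PiLp.sub_apply, PiLp.add_apply, PiLp.smul_apply, smul_eq_mul, hgc]
    ring
  have hv2 : (2 * ⟪u, a - g⟫) • u - (a - g) = b - g := by
    rw [huag]
    ext i
    simp [PiLp.sub_apply, PiLp.smul_apply, smul_eq_mul, hgc]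
    ring
  have c1 : dotSigma u * Amat γ g * dotSigma u = Amat γ (g - (a + b)) := by
    rw [UAU u g hu γ, hv1]
  have c2 : dotSigma u * Amat (1 - γ) (a - g) * dotSigma u = Amat (1 - γ) (b - g) := by
    rw [UAU u (a - g) hu (1 - γ), hv2]
  have m1 : Amat γ g + Amat (1 - γ) (a - g) = Amat 1 a := by
    rw [amat_add, show γ + (1 - γ) = 1 from by ring, show g + (a - g) = a from by abel]
  have m2 : Amat γ g + Amat (1 - γ) (b - g) = Amat 1 b := by
    rw [amat_add, show γ + (1 - γ) = 1 from by ring, show g + (b - g) = b from by abel]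
  have msum : Amat γ g + Amat (1 - γ) (a - g) + Amat (1 - γ) (b - g) +
      Amat γ (g - (a + b)) = 1 := by
    rw [amat_add, amat_add, amat_add,
      show γ + (1 - γ) + (1 - γ) + γ = 2 from by ring,
      show g + (a - g) + (b - g) + (g - (a + b)) = 0 from by abel, amat_two_zero]
  constructor
  · rintro ⟨h1, h2, -, -, -, -, -⟩
    rw [amat_psd_iff] at h1 h2
    refine ⟨by rw [s1]; exact h1, ?_⟩
    have h2' := h2
    nlinarith [s2 ▸ h2]
  · rintro ⟨hr1, hr2⟩
    have k1 : (Amat γ g).PosSemidef := (amat_psd_iff _ _).2 (by rw [← s1]; exact hr1)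
    have k2 : (Amat (1 - γ) (a - g)).PosSemidef :=
      (amat_psd_iff _ _).2 (by rw [← s2]; linarith)
    have k3 : (Amat (1 - γ) (b - g)).PosSemidef :=
      (amat_psd_iff _ _).2 (by rw [s3, ← s2]; linarith)
    have k4 : (Amat γ (g - (a + b))).PosSemidef :=
      (amat_psd_iff _ _).2 (by rw [s4, ← s1]; exact hr1)
    exact ⟨k1, k2, k3, k4, ⟨k1, k2, k3, k4, msum, m1, m2⟩, c1, c2⟩
end
end

section
/- If the covariant qubit observables E^{1,a} and E^{1,b} are jointly measurable, then (1/2)‖a+b‖ ≤ (1/2)(1 + a·b) ≤ 1 − (1/2)‖a−b‖; consequently the operators G⁰ᵢⱼ := (1/2)(A(1,ia)A(1,jb) + A(1,jb)A(1,ia)), i,j ∈ {+,−} (with A(1,+a)=A(1,a), A(1,−a)=A(1,−a)), form a joint observable of E^{1,a} and E^{1,b}. -/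
noncomputable section

open Matrix
open scoped RealInnerProductSpace ComplexOrder

/-! ### Auxiliary lemmas -/

lemma real_aux (X Y W : ℝ) (hX : 0 ≤ X) (hY : 0 ≤ Y) (hW : W^2 ≤ X*Y) :
    0 ≤ X + Y + 2*W := by nlinarith [sq_nonneg (X - Y), sq_nonneg (X + Y)]

lemma psd2_suf (x y : ℝ) (c : ℂ) (hx : 0 ≤ x) (hy : 0 ≤ y)
    (hc : Complex.normSq c ≤ x*y) :
    (!![(x:ℂ), c; (starRingEnd ℂ) c, (y:ℂ)]).PosSemidef := by
  refine Matrix.PosSemidef.of_dotProduct_mulVec_nonneg ?_ ?_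
  · ext i j
    fin_cases i <;> fin_cases j <;>
      simp [Matrix.conjTranspose_apply, Complex.ext_iff]
  · intro v
    have e : star v ⬝ᵥ ((!![(x:ℂ), c; (starRingEnd ℂ) c, (y:ℂ)]) *ᵥ v) =
        ((x * Complex.normSq (v 0) + y * Complex.normSq (v 1)
          + 2*((starRingEnd ℂ) (v 0) * c * v 1).re : ℝ) : ℂ) := by
      simp [dotProduct, Matrix.mulVec, Fin.sum_univ_two, Complex.ext_iff, Complex.normSq_apply,
        Complex.add_re, Complex.mul_re, Complex.mul_im]
      constructor <;> ring
    rw [e, ← Complex.ofReal_zero, Complex.real_le_real]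
    have h1 : ((starRingEnd ℂ) (v 0) * c * v 1).re ^ 2
        ≤ (x * Complex.normSq (v 0)) * (y * Complex.normSq (v 1)) := by
      have h2 : ((starRingEnd ℂ) (v 0) * c * v 1).re ^ 2
          ≤ Complex.normSq ((starRingEnd ℂ) (v 0) * c * v 1) := by
        rw [Complex.normSq_apply]; nlinarith [sq_nonneg (((starRingEnd ℂ) (v 0) * c * v 1).im)]
      calc ((starRingEnd ℂ) (v 0) * c * v 1).re ^ 2
          ≤ Complex.normSq ((starRingEnd ℂ) (v 0) * c * v 1) := h2
        _ = Complex.normSq (v 0) * Complex.normSq c * Complex.normSq (v 1) := by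
            rw [Complex.normSq_mul, Complex.normSq_mul, Complex.normSq_conj]
        _ ≤ (x * Complex.normSq (v 0)) * (y * Complex.normSq (v 1)) := by
            nlinarith [mul_le_mul_of_nonneg_left hc
              (mul_nonneg (Complex.normSq_nonneg (v 0)) (Complex.normSq_nonneg (v 1)))]
    have := real_aux (x * Complex.normSq (v 0)) (y * Complex.normSq (v 1)) _
      (mul_nonneg hx (Complex.normSq_nonneg _)) (mul_nonneg hy (Complex.normSq_nonneg _)) h1
    linarith

lemma psd2_nec (M : Matrix (Fin 2) (Fin 2) ℂ) (h : M.PosSemidef) :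
    (M 0 0).im = 0 ∧ (M 1 1).im = 0 ∧ M 1 0 = (starRingEnd ℂ) (M 0 1) ∧
    0 ≤ (M 0 0).re ∧ 0 ≤ (M 1 1).re ∧
    Complex.normSq (M 0 1) ≤ (M 0 0).re * (M 1 1).re := by
  have herm : ∀ i j, (starRingEnd ℂ) (M j i) = M i j := by
    intro i j
    have := congrFun (congrFun h.1 i) j
    simpa [Matrix.conjTranspose_apply] using this
  have hdiag : ∀ i, 0 ≤ M i i := by
    intro i
    have := h.dotProduct_mulVec_nonneg (Pi.single i 1)
    simpa [dotProduct, Matrix.mulVec, Fin.sum_univ_two, Pi.single_apply] using this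
  have hdet : 0 ≤ M.det := by
    rw [h.1.det_eq_prod_eigenvalues]
    have hp : (0:ℝ) ≤ ∏ i, h.1.eigenvalues i :=
      Finset.prod_nonneg fun i _ => h.eigenvalues_nonneg i
    rw [← RCLike.ofReal_prod]
    exact RCLike.ofReal_nonneg.mpr hp
  have h00 := hdiag 0
  have h11 := hdiag 1
  rw [Complex.le_def] at h00 h11 hdet
  have h10 : M 1 0 = (starRingEnd ℂ) (M 0 1) := by rw [← herm 0 1, Complex.conj_conj]
  refine ⟨h00.2.symm, h11.2.symm, h10, h00.1, h11.1, ?_⟩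
  have hd2 : M.det = M 0 0 * M 1 1 - M 0 1 * M 1 0 := Matrix.det_fin_two M
  rw [hd2, h10] at hdet
  have e00 : M 0 0 = ((M 0 0).re : ℂ) := by
    rw [Complex.ext_iff]; simp [← h00.2]
  have e11 : M 1 1 = ((M 1 1).re : ℂ) := by
    rw [Complex.ext_iff]; simp [← h11.2]
  rw [e00, e11, Complex.mul_conj] at hdet
  have := hdet.1
  simpa using this

lemma Amat_eq (a : V3) : Amat 1 a =
    !![(((1 + a 2)/2 : ℝ) : ℂ), ((a 0 / 2 : ℝ) : ℂ) - ((a 1 / 2 : ℝ) : ℂ) * Complex.I;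
       ((a 0 / 2 : ℝ) : ℂ) + ((a 1 / 2 : ℝ) : ℂ) * Complex.I, (((1 - a 2)/2 : ℝ) : ℂ)] := by
  ext i j
  fin_cases i <;> fin_cases j <;>
    simp [Amat, dotSigma, σ1, σ2, σ3, Matrix.one_apply] <;> ring

lemma mat2_add (a b c d a' b' c' d' : ℂ) :
    !![a,b;c,d] + !![a',b';c',d'] = !![a+a', b+b'; c+c', d+d'] := by
  ext i j; fin_cases i <;> fin_cases j <;> rfl

lemma mat2_smul (r a b c d : ℂ) :
    r • (!![a,b;c,d]) = !![r*a, r*b; r*c, r*d] := by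
  ext i j; fin_cases i <;> fin_cases j <;> rfl

lemma mat2_eq {a b c d a' b' c' d' : ℂ} (h1 : a = a') (h2 : b = b')
    (h3 : c = c') (h4 : d = d') : !![a,b;c,d] = !![a',b';c',d'] := by
  subst_vars; rfl

lemma anti_eq (a b : V3) :
    (2⁻¹ : ℂ) • (Amat 1 a * Amat 1 b + Amat 1 b * Amat 1 a) =
    !![((((1 + (a 0*b 0 + a 1*b 1 + a 2*b 2)) + (a 2 + b 2))/4 : ℝ) : ℂ),
       (((a 0 + b 0)/4 : ℝ) : ℂ) - (((a 1 + b 1)/4 : ℝ) : ℂ) * Complex.I;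
       (((a 0 + b 0)/4 : ℝ) : ℂ) + (((a 1 + b 1)/4 : ℝ) : ℂ) * Complex.I,
       ((((1 + (a 0*b 0 + a 1*b 1 + a 2*b 2)) - (a 2 + b 2))/4 : ℝ) : ℂ)] := by
  rw [Amat_eq a, Amat_eq b, Matrix.mul_fin_two, Matrix.mul_fin_two, mat2_add, mat2_smul]
  apply mat2_eq <;>
  · apply Complex.ext <;>
      simp only [Complex.add_re, Complex.add_im, Complex.mul_re, Complex.mul_im, Complex.sub_re,
        Complex.sub_im, Complex.ofReal_re, Complex.ofReal_im, Complex.I_re, Complex.I_im,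
        Complex.neg_re, Complex.neg_im, Complex.inv_re, Complex.inv_im, Complex.normSq_apply,
        Complex.re_ofNat, Complex.im_ofNat] <;>
      ring

lemma conj_mk (p q : ℝ) :
    ((p:ℂ) + (q:ℂ)*Complex.I) = (starRingEnd ℂ) ((p:ℂ) - (q:ℂ)*Complex.I) := by
  rw [map_sub, _root_.map_mul, Complex.conj_ofReal, Complex.conj_ofReal, Complex.conj_I]
  ring

lemma normSq_mk (p q : ℝ) :
    Complex.normSq ((p:ℂ) - (q:ℂ)*Complex.I) = p^2 + q^2 := by
  simp [Complex.normSq_apply]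
  ring

lemma norm_sq_V3 (v : V3) : ‖v‖^2 = (v 0)^2 + (v 1)^2 + (v 2)^2 := by
  rw [EuclideanSpace.norm_eq, Real.sq_sqrt (by positivity)]
  simp [Fin.sum_univ_three]

lemma inner_V3 (a b : V3) : ⟪a, b⟫ = a 0 * b 0 + a 1 * b 1 + a 2 * b 2 := by
  simp [PiLp.inner_apply, Fin.sum_univ_three]
  ring

lemma anti_psd (a b : V3) (hab : ‖a + b‖ ≤ 1 + ⟪a, b⟫) :
    ((2⁻¹ : ℂ) • (Amat 1 a * Amat 1 b + Amat 1 b * Amat 1 a)).PosSemidef := by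
  rw [anti_eq, conj_mk]
  have hs0 : (0:ℝ) ≤ ‖a + b‖ := norm_nonneg _
  have hs2 : ‖a + b‖^2 = (a 0 + b 0)^2 + (a 1 + b 1)^2 + (a 2 + b 2)^2 := by
    rw [norm_sq_V3]; simp [PiLp.add_apply]
  rw [inner_V3] at hab
  have h1t : (0:ℝ) ≤ 1 + (a 0*b 0 + a 1*b 1 + a 2*b 2) := le_trans hs0 hab
  have hss : ‖a + b‖^2 ≤ (1 + (a 0*b 0 + a 1*b 1 + a 2*b 2))^2 := by nlinarith
  have hz : (a 2 + b 2)^2 ≤ (1 + (a 0*b 0 + a 1*b 1 + a 2*b 2))^2 := by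
    nlinarith [sq_nonneg (a 0 + b 0), sq_nonneg (a 1 + b 1)]
  refine psd2_suf _ _ _ ?_ ?_ ?_
  · nlinarith
  · nlinarith
  · rw [normSq_mk]
    nlinarith

set_option maxHeartbeats 1000000 in
theorem stmt13 (a b : V3) (ha : ‖a‖ ≤ 1) (hb : ‖b‖ ≤ 1)
    (h : JMeff (Amat 1 a) (Amat 1 b)) :
    2⁻¹ * ‖a + b‖ ≤ 2⁻¹ * (1 + ⟪a, b⟫) ∧
    2⁻¹ * (1 + ⟪a, b⟫) ≤ 1 - 2⁻¹ * ‖a - b‖ ∧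
    IsJointObsM (Amat 1 a) (Amat 1 b)
      ((2⁻¹ : ℂ) • (Amat 1 a * Amat 1 b + Amat 1 b * Amat 1 a))
      ((2⁻¹ : ℂ) • (Amat 1 a * Amat 1 (-b) + Amat 1 (-b) * Amat 1 a))
      ((2⁻¹ : ℂ) • (Amat 1 (-a) * Amat 1 b + Amat 1 b * Amat 1 (-a)))
      ((2⁻¹ : ℂ) • (Amat 1 (-a) * Amat 1 (-b) + Amat 1 (-b) * Amat 1 (-a))) := by
  obtain ⟨G, h0, hA, hB, hC⟩ := h
  unfold matLE at h0 hA hB hC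
  rw [sub_zero] at h0
  set r0 := (G 0 0).re with hr0
  set r1 := (G 1 1).re with hr1
  set u := (G 0 1).re with hu
  set w := (G 0 1).im with hw
  obtain ⟨-, -, -, ip0, ip1, idet⟩ := psd2_nec _ h0
  have idet' : u^2 + w^2 ≤ r0 * r1 := by
    have : Complex.normSq (G 0 1) = u^2 + w^2 := by rw [Complex.normSq_apply]; ring
    linarith [idet, this ▸ idet]
  obtain ⟨-, -, -, ap0, ap1, adet⟩ := psd2_nec _ hA
  obtain ⟨-, -, -, bp0, bp1, bdet⟩ := psd2_nec _ hB
  obtain ⟨-, -, -, cp0, cp1, cdet⟩ := psd2_nec _ hC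
  have eA00 : ((Amat 1 a - G) 0 0).re = (1 + a 2)/2 - r0 := by
    rw [Amat_eq]; simp [Matrix.sub_apply, hr0]
  have eA11 : ((Amat 1 a - G) 1 1).re = (1 - a 2)/2 - r1 := by
    rw [Amat_eq]; simp [Matrix.sub_apply, hr1]
  have eA01 : Complex.normSq ((Amat 1 a - G) 0 1) = (a 0/2 - u)^2 + (a 1/2 + w)^2 := by
    rw [Amat_eq]; simp [Matrix.sub_apply, Complex.normSq_apply]; ring
  have eB00 : ((Amat 1 b - G) 0 0).re = (1 + b 2)/2 - r0 := by
    rw [Amat_eq]; simp [Matrix.sub_apply, hr0]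
  have eB11 : ((Amat 1 b - G) 1 1).re = (1 - b 2)/2 - r1 := by
    rw [Amat_eq]; simp [Matrix.sub_apply, hr1]
  have eB01 : Complex.normSq ((Amat 1 b - G) 0 1) = (b 0/2 - u)^2 + (b 1/2 + w)^2 := by
    rw [Amat_eq]; simp [Matrix.sub_apply, Complex.normSq_apply]; ring
  have eC00 : ((G - (Amat 1 a + Amat 1 b - 1)) 0 0).re = r0 - (a 2 + b 2)/2 := by
    rw [Amat_eq a, Amat_eq b]
    simp [Matrix.sub_apply, Matrix.add_apply, Matrix.one_apply]
    ring
  have eC11 : ((G - (Amat 1 a + Amat 1 b - 1)) 1 1).re = r1 + (a 2 + b 2)/2 := by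
    rw [Amat_eq a, Amat_eq b]
    simp [Matrix.sub_apply, Matrix.add_apply, Matrix.one_apply]
    ring
  have eC01 : Complex.normSq ((G - (Amat 1 a + Amat 1 b - 1)) 0 1) =
      (u - (a 0 + b 0)/2)^2 + (w + (a 1 + b 1)/2)^2 := by
    rw [Amat_eq a, Amat_eq b]
    simp [Matrix.sub_apply, Matrix.add_apply, Matrix.one_apply, Complex.normSq_apply]
    ring
  rw [eA00] at ap0; rw [eA11] at ap1; rw [eA00, eA11, eA01] at adet
  rw [eB00] at bp0; rw [eB11] at bp1; rw [eB00, eB11, eB01] at bdet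
  rw [eC00] at cp0; rw [eC11] at cp1; rw [eC00, eC11, eC01] at cdet
  have ip0' : (0:ℝ) ≤ r0 := by rw [hr0]; exact ip0
  have ip1' : (0:ℝ) ≤ r1 := by rw [hr1]; exact ip1
  clear eA00 eA11 eA01 eB00 eB11 eB01 eC00 eC11 eC01 idet ip0 ip1
  -- the vector g
  set gv : V3 := WithLp.toLp 2 ![2*u, -2*w, r0 - r1] with hgv
  have gv0 : gv 0 = 2*u := rfl
  have gv1 : gv 1 = -2*w := rfl
  have gv2 : gv 2 = r0 - r1 := rfl
  clear hgv h0 hA hB hC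
  clear_value gv
  clear hr0 hr1 hu hw
  clear_value r0 r1 u w
  clear G
  have hg : ‖gv‖ ≤ r0 + r1 := by
    have h1 : ‖gv‖^2 = (2*u)^2 + (-2*w)^2 + (r0 - r1)^2 := by
      rw [norm_sq_V3, gv0, gv1, gv2]
    nlinarith [norm_nonneg gv]
  have hCn : ‖a + b - gv‖ ≤ r0 + r1 := by
    have h1 : ‖a + b - gv‖^2 = (a 0 + b 0 - 2*u)^2 + (a 1 + b 1 + 2*w)^2
        + (a 2 + b 2 - (r0 - r1))^2 := by
      rw [norm_sq_V3]
      simp only [PiLp.add_apply, PiLp.sub_apply, gv0, gv1, gv2]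
      ring
    nlinarith [norm_nonneg (a + b - gv)]
  have hAn : ‖a - gv‖ ≤ 1 - (r0 + r1) := by
    have h1 : ‖a - gv‖^2 = (a 0 - 2*u)^2 + (a 1 + 2*w)^2 + (a 2 - (r0 - r1))^2 := by
      rw [norm_sq_V3]
      simp only [PiLp.sub_apply, gv0, gv1, gv2]
      ring
    nlinarith [norm_nonneg (a - gv)]
  have hBn : ‖b - gv‖ ≤ 1 - (r0 + r1) := by
    have h1 : ‖b - gv‖^2 = (b 0 - 2*u)^2 + (b 1 + 2*w)^2 + (b 2 - (r0 - r1))^2 := by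
      rw [norm_sq_V3]
      simp only [PiLp.sub_apply, gv0, gv1, gv2]
      ring
    nlinarith [norm_nonneg (b - gv)]
  have key1 : ‖a + b‖ + ‖a - b‖ ≤ 2 := by
    have t1 : ‖a + b‖ ≤ ‖a + b - gv‖ + ‖gv‖ := by
      calc ‖a + b‖ = ‖(a + b - gv) + gv‖ := by rw [sub_add_cancel]
        _ ≤ ‖a + b - gv‖ + ‖gv‖ := norm_add_le _ _
    have t2 : ‖a - b‖ ≤ ‖a - gv‖ + ‖b - gv‖ := by
      calc ‖a - b‖ = ‖(a - gv) - (b - gv)‖ := by rw [sub_sub_sub_cancel_right]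
        _ ≤ ‖a - gv‖ + ‖b - gv‖ := norm_sub_le _ _
    linarith
  have id1 : ‖a + b‖^2 = ‖a‖^2 + 2*⟪a, b⟫ + ‖b‖^2 := norm_add_sq_real a b
  have id2 : ‖a - b‖^2 = ‖a‖^2 - 2*⟪a, b⟫ + ‖b‖^2 := norm_sub_sq_real a b
  have hsn : (0:ℝ) ≤ ‖a + b‖ := norm_nonneg _
  have hdn : (0:ℝ) ≤ ‖a - b‖ := norm_nonneg _
  have ineq1 : ‖a + b‖ ≤ 1 + ⟪a, b⟫ := by
    nlinarith [mul_nonneg (show (0:ℝ) ≤ 2 - ‖a + b‖ - ‖a - b‖ by linarith)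
      (show (0:ℝ) ≤ 2 - ‖a + b‖ + ‖a - b‖ by linarith)]
  have ineq2 : 1 + ⟪a, b⟫ ≤ 2 - ‖a - b‖ := by
    nlinarith [mul_nonneg (show (0:ℝ) ≤ 2 - ‖a - b‖ - ‖a + b‖ by linarith)
      (show (0:ℝ) ≤ 2 - ‖a - b‖ + ‖a + b‖ by linarith)]
  refine ⟨by linarith, by linarith, ?_, ?_, ?_, ?_, ?_, ?_, ?_⟩
  · exact anti_psd a b ineq1
  · apply anti_psd a (-b)
    have e1 : a + -b = a - b := by abel
    have e2 : ⟪a, -b⟫ = -⟪a, b⟫ := inner_neg_right _ _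
    rw [e1, e2]; linarith
  · apply anti_psd (-a) b
    have e1 : -a + b = -(a - b) := by abel
    have e2 : ⟪-a, b⟫ = -⟪a, b⟫ := inner_neg_left _ _
    rw [e1, e2, norm_neg]; linarith
  · apply anti_psd (-a) (-b)
    have e1 : -a + -b = -(a + b) := by abel
    have e2 : ⟪-a, -b⟫ = ⟪a, b⟫ := inner_neg_neg _ _
    rw [e1, e2, norm_neg]; linarith
  · have e1 := anti_eq a b
    have e2 := anti_eq a (-b)
    have e3 := anti_eq (-a) b
    have e4 := anti_eq (-a) (-b)
    simp only [PiLp.neg_apply] at e2 e3 e4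
    rw [e1, e2, e3, e4, mat2_add, mat2_add, mat2_add, Matrix.one_fin_two]
    apply mat2_eq <;> push_cast <;> ring
  · have e1 := anti_eq a b
    have e2 := anti_eq a (-b)
    simp only [PiLp.neg_apply] at e2
    rw [e1, e2, mat2_add, Amat_eq a]
    apply mat2_eq <;> push_cast <;> ring
  · have e1 := anti_eq a b
    have e3 := anti_eq (-a) b
    simp only [PiLp.neg_apply] at e3
    rw [e1, e3, mat2_add, Amat_eq b]
    apply mat2_eq <;> push_cast <;> ring
end
end

section
/- Let a, b ∈ ℝ³ with a ⊥ b, ‖a‖ = 1, 0 < ‖b‖ =: r, and α ∈ (0,1]. Then the effects A := α·A(1,a) (a multiple of a rank-one projection) and B := A(1,b) are jointly measurable if and only if α − (1−r²)/2 ≤ min{(1−r²)/2, α}. Moreover, for α = 1/2 and r² = 1/2 this joint measurability condition holds while the inequality √(α² + r²) + α(1−α)/√(α²+r²) ≤ 1 fails. -/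
noncomputable section
set_option maxHeartbeats 1000000

open Matrix
open scoped RealInnerProductSpace ComplexOrder

lemma dotSigma_herm (c : V3) : (dotSigma c).IsHermitian := by
  ext i j
  fin_cases i <;> fin_cases j <;>
    simp [dotSigma, σ1, σ2, σ3, Matrix.IsHermitian, Matrix.conjTranspose_apply, Complex.ext_iff]

lemma sq_self (b : V3) (r : ℝ) (hb : b 0 ^ 2 + b 1 ^ 2 + b 2 ^ 2 = r ^ 2) :
    dotSigma b * dotSigma b = ((r ^ 2 : ℝ) : ℂ) • 1 := by
  ext i j
  fin_cases i <;> fin_cases j <;>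
    · simp [dotSigma, σ1, σ2, σ3, Matrix.mul_apply, Fin.sum_univ_succ, Matrix.one_apply,
        Complex.ext_iff, pow_two, Complex.mul_re, Complex.mul_im]
      constructor <;> nlinarith [hb]

lemma psd_smul {M : Matrix (Fin 2) (Fin 2) ℂ} (hM : M.PosSemidef) {t : ℝ} (ht : 0 ≤ t) :
    ((t:ℂ) • M).PosSemidef := by
  constructor
  · unfold Matrix.IsHermitian
    rw [Matrix.conjTranspose_smul, hM.1]; simp
  · intro x
    exact (hM.smul (show (0:ℂ) ≤ (t:ℂ) by exact_mod_cast Complex.zero_le_real.mpr ht)).2 x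

lemma psd_add {M N : Matrix (Fin 2) (Fin 2) ℂ} (hM : M.PosSemidef) (hN : N.PosSemidef) :
    (M + N).PosSemidef :=
  ⟨hM.1.add hN.1, fun x => by
    exact (hM.add hN).2 x⟩

lemma psd_form (t : ℝ) (c : V3) (ht : 0 ≤ t) (hc : c 0^2 + c 1^2 + c 2^2 ≤ t^2) :
    ((t:ℂ) • 1 + dotSigma c).PosSemidef := by
  set s := Real.sqrt (c 0^2 + c 1^2 + c 2^2) with hs
  have hs0 : 0 ≤ s := Real.sqrt_nonneg _
  have hs2 : s^2 = c 0^2 + c 1^2 + c 2^2 := Real.sq_sqrt (by positivity)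
  have hst : s ≤ t := by nlinarith
  have hsplit : (t:ℂ) • (1 : Matrix (Fin 2) (Fin 2) ℂ) + dotSigma c
      = ((t - s : ℝ):ℂ) • 1 + ((s:ℂ) • 1 + dotSigma c) := by
    push_cast; module
  rw [hsplit]
  refine psd_add (psd_smul Matrix.PosSemidef.one (by linarith)) ?_
  rcases eq_or_lt_of_le hs0 with h0 | hpos
  · have hcc : c 0^2 + c 1^2 + c 2^2 = 0 := by rw [← hs2, ← h0]; ring
    have h0' : c 0 = 0 ∧ c 1 = 0 ∧ c 2 = 0 := ⟨by nlinarith, by nlinarith, by nlinarith⟩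
    have heq : ((s:ℂ) • 1 + dotSigma c) = ((0:ℝ):ℂ) • (1 : Matrix (Fin 2) (Fin 2) ℂ) := by
      rw [← h0]
      ext i j
      fin_cases i <;> fin_cases j <;>
        simp [dotSigma, σ1, σ2, σ3, h0'.1, h0'.2.1, h0'.2.2, Matrix.one_apply]
    rw [heq]
    exact psd_smul Matrix.PosSemidef.one le_rfl
  · set D := (s:ℂ) • (1 : Matrix (Fin 2) (Fin 2) ℂ) + dotSigma c with hD
    have hherm : D.IsHermitian := by
      unfold Matrix.IsHermitian
      rw [hD, Matrix.conjTranspose_add, Matrix.conjTranspose_smul, Matrix.conjTranspose_one,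
        (dotSigma_herm c).eq]
      simp
    have key : D = (((2*s)⁻¹ : ℝ):ℂ) • (Dᴴ * D) := by
      rw [hherm.eq]
      have hDD : D * D = ((2*s : ℝ):ℂ) • D := by
        rw [hD]
        simp only [add_mul, mul_add, smul_mul_assoc, Matrix.mul_smul, one_mul, mul_one,
          sq_self c s hs2.symm]
        push_cast
        module
      rw [hDD, smul_smul]
      norm_cast
      rw [inv_mul_cancel₀ (by positivity)]
      simp
    rw [key]
    exact psd_smul (Matrix.posSemidef_conjTranspose_mul_self D) (by positivity)

lemma bwd (a b : V3) (r α : ℝ)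
    (ha : a 0 ^ 2 + a 1 ^ 2 + a 2 ^ 2 = 1) (hb : b 0 ^ 2 + b 1 ^ 2 + b 2 ^ 2 = r ^ 2)
    (hab : a 0 * b 0 + a 1 * b 1 + a 2 * b 2 = 0)
    (hα0 : 0 < α) (hα1 : α ≤ 1) (hle : α ≤ 1 - r ^ 2) :
    JMeff ((α : ℂ) • Amat 1 a) (Amat 1 b) := by
  refine ⟨((α/2 : ℝ) : ℂ) • Amat 1 a, ?_, ?_, ?_, ?_⟩
  · show (((α/2:ℝ):ℂ) • Amat 1 a - 0).PosSemidef
    have E : ((α/2:ℝ):ℂ) • Amat 1 a - 0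
        = ((α/4 : ℝ):ℂ) • 1 + dotSigma (WithLp.toLp 2 ![α/4 * a 0, α/4 * a 1, α/4 * a 2] : V3) := by
      ext i j
      fin_cases i <;> fin_cases j <;>
        · simp [Amat, dotSigma, σ1, σ2, σ3, Matrix.one_apply, Complex.ext_iff]
          push_cast
          first
          | (constructor <;> ring)
          | ring
    rw [E]
    refine psd_form _ _ (by positivity) ?_
    show (α/4 * a 0)^2 + (α/4 * a 1)^2 + (α/4 * a 2)^2 ≤ (α/4)^2
    nlinarith [ha]
  · show ((α : ℂ) • Amat 1 a - ((α/2:ℝ):ℂ) • Amat 1 a).PosSemidef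
    have E : (α : ℂ) • Amat 1 a - ((α/2:ℝ):ℂ) • Amat 1 a
        = ((α/4 : ℝ):ℂ) • 1 + dotSigma (WithLp.toLp 2 ![α/4 * a 0, α/4 * a 1, α/4 * a 2] : V3) := by
      ext i j
      fin_cases i <;> fin_cases j <;>
        · simp [Amat, dotSigma, σ1, σ2, σ3, Matrix.one_apply, Complex.ext_iff]
          push_cast
          first
          | (constructor <;> ring)
          | ring
    rw [E]
    refine psd_form _ _ (by positivity) ?_
    show (α/4 * a 0)^2 + (α/4 * a 1)^2 + (α/4 * a 2)^2 ≤ (α/4)^2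
    nlinarith [ha]
  · show (Amat 1 b - ((α/2:ℝ):ℂ) • Amat 1 a).PosSemidef
    have E : Amat 1 b - ((α/2:ℝ):ℂ) • Amat 1 a
        = (((2-α)/4 : ℝ):ℂ) • 1
          + dotSigma (WithLp.toLp 2 ![b 0/2 - α/4 * a 0, b 1/2 - α/4 * a 1, b 2/2 - α/4 * a 2] : V3) := by
      ext i j
      fin_cases i <;> fin_cases j <;>
        · simp [Amat, dotSigma, σ1, σ2, σ3, Matrix.one_apply, Complex.ext_iff]
          push_cast
          first
          | (constructor <;> ring)
          | ring
    rw [E]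
    refine psd_form _ _ (by nlinarith) ?_
    show (b 0/2 - α/4 * a 0)^2 + (b 1/2 - α/4 * a 1)^2 + (b 2/2 - α/4 * a 2)^2 ≤ ((2-α)/4)^2
    nlinarith [ha, hb, hab, sq_nonneg r]
  · show (((α/2:ℝ):ℂ) • Amat 1 a - ((α : ℂ) • Amat 1 a + Amat 1 b - 1)).PosSemidef
    have E : ((α/2:ℝ):ℂ) • Amat 1 a - ((α : ℂ) • Amat 1 a + Amat 1 b - 1)
        = (((2-α)/4 : ℝ):ℂ) • 1
          + dotSigma (WithLp.toLp 2 ![-(α/4) * a 0 - b 0/2, -(α/4) * a 1 - b 1/2, -(α/4) * a 2 - b 2/2] : V3) := by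
      ext i j
      fin_cases i <;> fin_cases j <;>
        · simp [Amat, dotSigma, σ1, σ2, σ3, Matrix.one_apply, Complex.ext_iff]
          push_cast
          first
          | (constructor <;> ring)
          | ring
    rw [E]
    refine psd_form _ _ (by nlinarith) ?_
    show (-(α/4) * a 0 - b 0/2)^2 + (-(α/4) * a 1 - b 1/2)^2 + (-(α/4) * a 2 - b 2/2)^2 ≤ ((2-α)/4)^2
    nlinarith [ha, hb, hab, sq_nonneg r]

lemma anti (a b : V3) (hab : a 0 * b 0 + a 1 * b 1 + a 2 * b 2 = 0) :
    dotSigma a * dotSigma b + dotSigma b * dotSigma a = 0 := by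
  ext i j
  fin_cases i <;> fin_cases j <;>
    · simp [dotSigma, σ1, σ2, σ3, Matrix.mul_apply, Fin.sum_univ_succ, Complex.ext_iff]
      constructor <;> nlinarith [hab]

lemma fwd (a b : V3) (r α : ℝ)
    (ha : a 0 ^ 2 + a 1 ^ 2 + a 2 ^ 2 = 1) (hb : b 0 ^ 2 + b 1 ^ 2 + b 2 ^ 2 = r ^ 2)
    (hab : a 0 * b 0 + a 1 * b 1 + a 2 * b 2 = 0)
    (u : Fin 2 → ℂ) (hu : dotSigma a *ᵥ u = u) (hu0 : u ≠ 0)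
    (h : JMeff ((α : ℂ) • Amat 1 a) (Amat 1 b)) : α ≤ 1 - r ^ 2 := by
  obtain ⟨G, hG0, hGA, hGB, hABG⟩ := h
  rw [matLE, sub_zero] at hG0
  have hanti : dotSigma a * dotSigma b = -(dotSigma b * dotSigma a) :=
    eq_neg_of_add_eq_zero_left (anti a b hab)
  obtain ⟨v, hv⟩ : ∃ v, dotSigma b *ᵥ u = v := ⟨_, rfl⟩
  have hsav : dotSigma a *ᵥ v = -v := by
    rw [← hv, Matrix.mulVec_mulVec, hanti, Matrix.neg_mulVec, ← Matrix.mulVec_mulVec, hu]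
  have hsbv : dotSigma b *ᵥ v = ((r ^ 2 : ℝ) : ℂ) • u := by
    rw [← hv, Matrix.mulVec_mulVec, sq_self b r hb, Matrix.smul_mulVec, Matrix.one_mulVec]
  -- dot products
  have herma := (dotSigma_herm a).eq
  have hermb := (dotSigma_herm b).eq
  have huv : star u ⬝ᵥ v = 0 := by
    have h1 : star u ⬝ᵥ v = -(star u ⬝ᵥ v) := by
      conv_lhs => rw [← hu, Matrix.star_mulVec, herma, ← Matrix.dotProduct_mulVec, hsav,
        dotProduct_neg]
    linear_combination (1 / 2 : ℂ) * h1
  have hvu : star v ⬝ᵥ u = 0 := by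
    rw [Matrix.star_dotProduct, huv, star_zero]
  have hvv : star v ⬝ᵥ v = ((r ^ 2 : ℝ) : ℂ) * (star u ⬝ᵥ u) := by
    have h2 : star v ᵥ* dotSigma b = ((r ^ 2 : ℝ) : ℂ) • star u := by
      have h3 : star v ᵥ* dotSigma b = star (dotSigma b *ᵥ v) := by
        rw [Matrix.star_mulVec, hermb]
      rw [h3, hsbv, star_smul]
      simp
    nth_rewrite 2 [← hv]
    rw [Matrix.dotProduct_mulVec, h2, smul_dotProduct]
    simp [smul_eq_mul]
  obtain ⟨n, hn⟩ : ∃ n, star u ⬝ᵥ u = n := ⟨_, rfl⟩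
  rw [hn] at hvv
  have hn0 : 0 ≤ n := hn ▸ dotProduct_star_self_nonneg u
  have hnne : n ≠ 0 := fun hz => hu0 (dotProduct_star_self_eq_zero.mp (hn ▸ hz))
  have hnpos : 0 < n := lt_of_le_of_ne hn0 (Ne.symm hnne)
  -- mulVec of the effects
  have hPu : Amat 1 a *ᵥ u = u := by
    rw [Amat, Matrix.smul_mulVec, Matrix.add_mulVec, Matrix.smul_mulVec,
      Matrix.one_mulVec, hu, Complex.ofReal_one, one_smul]
    module
  have hPv : Amat 1 a *ᵥ v = 0 := by
    rw [Amat, Matrix.smul_mulVec, Matrix.add_mulVec, Matrix.smul_mulVec,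
      Matrix.one_mulVec, hsav, Complex.ofReal_one, one_smul]
    module
  have hBu : Amat 1 b *ᵥ u = (2⁻¹ : ℂ) • (u + v) := by
    rw [Amat, Matrix.smul_mulVec, Matrix.add_mulVec, Matrix.smul_mulVec,
      Matrix.one_mulVec, hv, Complex.ofReal_one, one_smul]
  have hBv : Amat 1 b *ᵥ v = (2⁻¹ : ℂ) • (v + ((r ^ 2 : ℝ) : ℂ) • u) := by
    rw [Amat, Matrix.smul_mulVec, Matrix.add_mulVec, Matrix.smul_mulVec,
      Matrix.one_mulVec, hsbv, Complex.ofReal_one, one_smul]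
  -- G kills v
  have hGvv : star v ⬝ᵥ (G *ᵥ v) = 0 := by
    refine le_antisymm ?_ (hG0.dotProduct_mulVec_nonneg v)
    have h2 := Matrix.PosSemidef.dotProduct_mulVec_nonneg hGA v
    rw [Matrix.sub_mulVec, Matrix.smul_mulVec, hPv, smul_zero, zero_sub,
      dotProduct_neg] at h2
    exact neg_nonneg.mp h2
  have hGv : G *ᵥ v = 0 := (hG0.dotProduct_mulVec_zero_iff v).mp hGvv
  have hGvu : star v ⬝ᵥ (G *ᵥ u) = 0 := by
    have h3 : star v ᵥ* G = star (G *ᵥ v) := by rw [Matrix.star_mulVec, hG0.1.eq]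
    rw [Matrix.dotProduct_mulVec, h3, hGv, star_zero, zero_dotProduct]
  obtain ⟨g, hg⟩ : ∃ g, star u ⬝ᵥ (G *ᵥ u) = g := ⟨_, rfl⟩
  -- inequality 1
  have e1 : (Amat 1 b - G) *ᵥ (u - v) = (2⁻¹ * (1 - (r ^ 2 : ℝ)) : ℂ) • u - G *ᵥ u := by
    rw [Matrix.sub_mulVec, Matrix.mulVec_sub, Matrix.mulVec_sub, hBu, hBv, hGv]
    module
  have i1 : 0 ≤ (2⁻¹ * (1 - (r ^ 2 : ℝ)) : ℂ) * n - g := by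
    have i0 := Matrix.PosSemidef.dotProduct_mulVec_nonneg hGB (u - v)
    rw [e1] at i0
    have e1' : star (u - v) ⬝ᵥ ((2⁻¹ * (1 - (r ^ 2 : ℝ)) : ℂ) • u - G *ᵥ u)
        = (2⁻¹ * (1 - (r ^ 2 : ℝ)) : ℂ) * n - g := by
      rw [star_sub, sub_dotProduct, dotProduct_sub, dotProduct_sub,
        dotProduct_smul, dotProduct_smul, hvu, hGvu, hn, hg]
      simp [smul_eq_mul]
    rw [e1'] at i0
    exact i0
  -- inequality 2
  have e2 : (G - ((α : ℂ) • Amat 1 a + Amat 1 b - 1)) *ᵥ (u + v)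
      = G *ᵥ u + ((2⁻¹ * (1 - (r ^ 2 : ℝ)) : ℂ) - (α : ℂ)) • u := by
    simp only [Matrix.sub_mulVec, Matrix.add_mulVec, Matrix.mulVec_add,
      Matrix.smul_mulVec, Matrix.one_mulVec, hPu, hPv, hBu, hBv, hGv]
    module
  have i2 : 0 ≤ g + ((2⁻¹ * (1 - (r ^ 2 : ℝ)) : ℂ) - (α : ℂ)) * n := by
    have i0 := Matrix.PosSemidef.dotProduct_mulVec_nonneg hABG (u + v)
    rw [e2] at i0
    have e2' : star (u + v) ⬝ᵥ (G *ᵥ u + ((2⁻¹ * (1 - (r ^ 2 : ℝ)) : ℂ) - (α : ℂ)) • u)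
        = g + ((2⁻¹ * (1 - (r ^ 2 : ℝ)) : ℂ) - (α : ℂ)) * n := by
      rw [star_add, add_dotProduct, dotProduct_add, dotProduct_add,
        dotProduct_smul, dotProduct_smul, hvu, hGvu, hn, hg]
      simp [smul_eq_mul]
    rw [e2'] at i0
    exact i0
  have i3 : 0 ≤ ((1 - r ^ 2 - α : ℝ) : ℂ) * n := by
    have hsum := add_nonneg i1 i2
    have e3 : (2⁻¹ * (1 - (r ^ 2 : ℝ)) : ℂ) * n - g
        + (g + ((2⁻¹ * (1 - (r ^ 2 : ℝ)) : ℂ) - (α : ℂ)) * n) = ((1 - r ^ 2 - α : ℝ) : ℂ) * n := by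
      push_cast
      ring
    rw [e3] at hsum
    exact hsum
  have hnre : 0 < n.re := (Complex.lt_def.mp hnpos).1
  have hre := (Complex.le_def.mp i3).1
  rw [Complex.re_ofReal_mul] at hre
  simp only [Complex.zero_re] at hre
  nlinarith [hre, hnre]

lemma eig1 (a : V3) (ha : a 0 ^ 2 + a 1 ^ 2 + a 2 ^ 2 = 1) (h2 : a 2 ≠ -1) :
    dotSigma a *ᵥ ![((1 + a 2 : ℝ) : ℂ), (a 0 : ℂ) + Complex.I * (a 1 : ℂ)]
      = ![((1 + a 2 : ℝ) : ℂ), (a 0 : ℂ) + Complex.I * (a 1 : ℂ)]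
      ∧ (![((1 + a 2 : ℝ) : ℂ), (a 0 : ℂ) + Complex.I * (a 1 : ℂ)] : Fin 2 → ℂ) ≠ 0 := by
  constructor
  · ext i
    fin_cases i <;>
      · simp [dotSigma, σ1, σ2, σ3, Matrix.mulVec, dotProduct, Fin.sum_univ_succ,
          Complex.ext_iff]
        constructor <;> nlinarith [ha]
  · intro hcon
    have h := congrFun hcon 0
    simp [Complex.ext_iff] at h
    exact h2 (by linarith)

lemma eig2 (a : V3) (ha : a 0 ^ 2 + a 1 ^ 2 + a 2 ^ 2 = 1) (h2 : a 2 = -1) :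
    dotSigma a *ᵥ ![0, 1] = ![0, 1] ∧ (![0, 1] : Fin 2 → ℂ) ≠ 0 := by
  have h0 : a 0 = 0 := by nlinarith
  have h1 : a 1 = 0 := by nlinarith
  constructor
  · ext i
    fin_cases i <;>
      simp [dotSigma, σ1, σ2, σ3, Matrix.mulVec, dotProduct, Fin.sum_univ_succ,
        h0, h1, h2]
  · intro hcon
    have h := congrFun hcon 1
    simp at h


theorem stmt18 (a b : V3) (r α : ℝ) (hab : ⟪a, b⟫ = 0) (ha : ‖a‖ = 1) (hr : ‖b‖ = r)
    (hr0 : 0 < r) (hr1 : r ≤ 1) (hα0 : 0 < α) (hα1 : α ≤ 1) :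
    (JMeff ((α : ℂ) • Amat 1 a) (Amat 1 b) ↔
      α - (1 - r ^ 2) / 2 ≤ min ((1 - r ^ 2) / 2) α) ∧
    (α = 1 / 2 → r ^ 2 = 1 / 2 →
      JMeff ((α : ℂ) • Amat 1 a) (Amat 1 b) ∧
      ¬ (Real.sqrt (α ^ 2 + r ^ 2) + α * (1 - α) / Real.sqrt (α ^ 2 + r ^ 2) ≤ 1)) := by
  have hab' : a 0 * b 0 + a 1 * b 1 + a 2 * b 2 = 0 := by
    rw [PiLp.inner_apply] at hab
    simpa [Fin.sum_univ_three, mul_comm] using hab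
  have ha' : a 0 ^ 2 + a 1 ^ 2 + a 2 ^ 2 = 1 := by
    have h := real_inner_self_eq_norm_sq a
    rw [PiLp.inner_apply, ha] at h
    simp only [Fin.sum_univ_three, RCLike.inner_apply, starRingEnd_apply, star_trivial] at h
    nlinarith [h]
  have hb' : b 0 ^ 2 + b 1 ^ 2 + b 2 ^ 2 = r ^ 2 := by
    have h := real_inner_self_eq_norm_sq b
    rw [PiLp.inner_apply, hr] at h
    simp only [Fin.sum_univ_three, RCLike.inner_apply, starRingEnd_apply, star_trivial] at h
    nlinarith [h]
  have hiff : JMeff ((α : ℂ) • Amat 1 a) (Amat 1 b) ↔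
      α - (1 - r ^ 2) / 2 ≤ min ((1 - r ^ 2) / 2) α := by
    constructor
    · intro h
      have hle : α ≤ 1 - r ^ 2 := by
        rcases eq_or_ne (a 2) (-1) with h2 | h2
        · obtain ⟨hu, hu0⟩ := eig2 a ha' h2
          exact fwd a b r α ha' hb' hab' _ hu hu0 h
        · obtain ⟨hu, hu0⟩ := eig1 a ha' h2
          exact fwd a b r α ha' hb' hab' _ hu hu0 h
      rw [le_min_iff]
      constructor <;> nlinarith
    · intro h
      have hle : α ≤ 1 - r ^ 2 := by
        have := le_trans h (min_le_left _ _)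
        linarith
      exact bwd a b r α ha' hb' hab' hα0 hα1 hle
  refine ⟨hiff, fun hA hR => ⟨?_, ?_⟩⟩
  · refine hiff.mpr ?_
    rw [le_min_iff]
    constructor <;> nlinarith
  · intro hcon
    have h34 : α ^ 2 + r ^ 2 = 3/4 := by rw [hA, hR]; norm_num
    rw [h34] at hcon
    have hs0 : 0 < Real.sqrt (3/4) := Real.sqrt_pos.mpr (by norm_num)
    have hs2 : Real.sqrt (3/4) ^ 2 = 3/4 := Real.sq_sqrt (by norm_num)
    rw [hA] at hcon
    have hcon' : Real.sqrt (3/4) + (1/4) / Real.sqrt (3/4) ≤ 1 := by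
      convert hcon using 3
      norm_num
    have hmul := mul_le_mul_of_nonneg_left hcon' (le_of_lt hs0)
    rw [mul_add, mul_div_cancel₀ _ (ne_of_gt hs0)] at hmul
    nlinarith [hs2, hs0, hmul]
end
end
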